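/- For any string X of length n with X[0] = -∞ and its 2d-Min-Heap H, every node j on the path from node i (1 ≤ i ≤ n) to the root, other than i itself, satisfies j < i and X[j] < X[i]; conversely, if j < i and X[j] < X[i'] for all i' with j < i' ≤ i, then j is an ancestor of i in H. -/

import Mathlib

variable {α : Type*} [LinearOrder α]

/-- The parent of node `i ≥ 1` in the 2d-Min-Heap of `X` (with `X 0 = ⊥` playing the
role of `-∞`): the largest `j < i` with `X j < X i`. -/
noncomputable def heapParent (X : ℕ → WithBot α) (i : ℕ) : ℕ :=
  Nat.findGreatest (fun j => X j < X i) (i - 1)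

/-- `HeapAnc X a d` : node `a` is a (reflexive) ancestor of node `d` in the
2d-Min-Heap of `X`, i.e. `a` is reachable from `d` by repeatedly taking parents. -/
def HeapAnc (X : ℕ → WithBot α) (a d : ℕ) : Prop :=
  Relation.ReflTransGen (fun x y => x ≠ 0 ∧ y = heapParent X x) d a

/-!
Each parent step strictly decreases both the index and the value, which gives the first half.
For the converse, if `X j` is below every `X i'` with `j < i' ≤ i`, then `j ≤ heapParent X i`
by maximality of the parent, and the parent again satisfies the hypothesis, so induction on `i`
walks down the parent chain until it reaches `j`.
-/

section

variable (X : ℕ → WithBot α) {i j : ℕ}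

lemma heapParent_lt (hi : i ≠ 0) : heapParent X i < i :=
  (Nat.findGreatest_le (i - 1)).trans_lt (by omega)

lemma le_heapParent (hji : j < i) (hX : X j < X i) : j ≤ heapParent X i :=
  Nat.le_findGreatest (by omega) hX

-- Without `X 0 < X i` the search may fail, and `Nat.findGreatest` returns its junk value `0`.
lemma apply_heapParent_lt (hX0 : X 0 < X i) : X (heapParent X i) < X i :=
  Nat.findGreatest_spec (P := fun j => X j < X i) (Nat.zero_le _) hX0

lemma heapAnc_parent (hi : i ≠ 0) : HeapAnc X (heapParent X i) i :=
  .single ⟨hi, rfl⟩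

variable {X}

lemma HeapAnc.lt_and_apply_lt (hX0 : ∀ b, b ≠ 0 → X 0 < X b) (h : HeapAnc X j i)
    (hji : j ≠ i) : j < i ∧ X j < X i := by
  induction h with
  | refl => exact absurd rfl hji
  | @tail b c _ hbc ih =>
    obtain ⟨hb, rfl⟩ := hbc
    have hparent := And.intro (heapParent_lt X hb) (apply_heapParent_lt X (hX0 b hb))
    rcases eq_or_ne b i with rfl | hbi
    · exact hparent
    · obtain ⟨hbi_lt, hXbi⟩ := ih hbi
      exact ⟨hparent.1.trans hbi_lt, hparent.2.trans hXbi⟩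

lemma heapAnc_of_forall_lt (hji : j < i) (hmin : ∀ i', j < i' → i' ≤ i → X j < X i') :
    HeapAnc X j i := by
  induction i using Nat.strong_induction_on with
  | _ i ih =>
    have hi : i ≠ 0 := by omega
    have hjp : j ≤ heapParent X i := le_heapParent X hji (hmin i hji le_rfl)
    rcases hjp.eq_or_lt with rfl | hjp
    · exact heapAnc_parent X hi
    · have hp := heapParent_lt X hi
      exact .head ⟨hi, rfl⟩ <| ih _ hp hjp fun i' h₁ h₂ => hmin i' h₁ (by omega)

end

theorem heap_path_characterization_general (X : ℕ → WithBot α)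
    (h0 : X 0 = ⊥) (hne : ∀ i : ℕ, 1 ≤ i → X i ≠ ⊥)
    (i : ℕ) :
    (∀ j : ℕ, HeapAnc X j i → j ≠ i → j < i ∧ X j < X i) ∧
    (∀ j : ℕ, j < i → (∀ i' : ℕ, j < i' → i' ≤ i → X j < X i') → HeapAnc X j i) := by
  have hX0 : ∀ b, b ≠ 0 → X 0 < X b := fun b hb => h0 ▸ (hne b (by omega)).bot_lt
  exact ⟨fun _ => HeapAnc.lt_and_apply_lt hX0, fun _ => heapAnc_of_forall_lt⟩

/-- Characterization of ancestors in the 2d-Min-Heap: every node `j ≠ i` on the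
path from `i` to the root satisfies `j < i` and `X j < X i`; conversely, if
`j < i` and `X j < X i'` for all `i'` with `j < i' ≤ i`, then `j` is an
ancestor of `i`. -/
theorem heap_path_characterization (X : ℕ → WithBot α)
    (h0 : X 0 = ⊥) (hne : ∀ i : ℕ, 1 ≤ i → X i ≠ ⊥)
    (i : ℕ) (hi : 1 ≤ i) :
    (∀ j : ℕ, HeapAnc X j i → j ≠ i → j < i ∧ X j < X i) ∧
    (∀ j : ℕ, j < i → (∀ i' : ℕ, j < i' → i' ≤ i → X j < X i') → HeapAnc X j i) :=
  heap_path_characterization_general X h0 hne i
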